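/- Let K be the family of double cones O = (a + V₊) ∩ (b − V₊) in Minkowski space ℝ^{1+s}, a, b ∈ ℝ^{1+s} with b − a ∈ V₊. For double cones O and P, the closure of O is contained in P if and only if the set {x ∈ ℝ^{1+s} : O + x ⊆ P} is a neighbourhood of the origin. -/
import Mathlib

/-- The open forward light cone `V₊ = {x : x₀ > 0, x₀² > x₁² + ⋯ + x_s²}`. -/
def Vplus (s : ℕ) : Set (Fin (s + 1) → ℝ) :=
  {x | 0 < x 0 ∧ ∑ i ∈ Finset.univ.erase 0, (x i) ^ 2 < (x 0) ^ 2}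

/-- The double cone `O = (a + V₊) ∩ (b - V₊)`. -/
def DoubleCone (s : ℕ) (a b : Fin (s + 1) → ℝ) : Set (Fin (s + 1) → ℝ) :=
  {x | x - a ∈ Vplus s ∧ b - x ∈ Vplus s}

lemma isOpen_Vplus (s : ℕ) : IsOpen (Vplus s) := by
  have : Vplus s = {x : Fin (s + 1) → ℝ | 0 < x 0} ∩
      {x : Fin (s + 1) → ℝ | ∑ i ∈ Finset.univ.erase 0, (x i) ^ 2 < (x 0) ^ 2} := rfl
  rw [this]
  exact (isOpen_lt continuous_const (continuous_apply 0)).inter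
    (isOpen_lt (by continuity) ((continuous_apply 0).pow 2))

lemma isOpen_DoubleCone (s : ℕ) (a b : Fin (s + 1) → ℝ) : IsOpen (DoubleCone s a b) := by
  have : DoubleCone s a b = (fun x => x - a) ⁻¹' (Vplus s) ∩ (fun x => b - x) ⁻¹' (Vplus s) :=
    rfl
  rw [this]
  exact ((isOpen_Vplus s).preimage (continuous_id.sub continuous_const)).inter
    ((isOpen_Vplus s).preimage (continuous_const.sub continuous_id))

lemma bounded_DoubleCone (s : ℕ) (a b : Fin (s + 1) → ℝ) :
    DoubleCone s a b ⊆ Metric.closedBall a (b 0 - a 0) := by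
  rintro x ⟨⟨h1, h2⟩, ⟨h3, h4⟩⟩
  simp only [Pi.sub_apply] at h1 h2 h3 h4
  have hr : (0:ℝ) ≤ b 0 - a 0 := by linarith
  rw [Metric.mem_closedBall, dist_pi_le_iff hr]
  intro i
  rw [Real.dist_eq]
  by_cases hi : i = 0
  · subst hi
    rw [abs_of_pos h1]; linarith
  · have hmem : i ∈ Finset.univ.erase 0 := Finset.mem_erase.mpr ⟨hi, Finset.mem_univ i⟩
    have hle : (x i - a i) ^ 2 ≤ ∑ j ∈ Finset.univ.erase 0, (x j - a j) ^ 2 :=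
      Finset.single_le_sum (f := fun j => (x j - a j) ^ 2) (fun j _ => sq_nonneg _) hmem
    have : (x i - a i) ^ 2 < (b 0 - a 0) ^ 2 := by nlinarith
    exact (abs_lt_of_sq_lt_sq this hr).le

/-- For double cones `O` and `P`, the closure of `O` is contained in `P` iff
`{x : O + x ⊆ P}` is a neighbourhood of the origin. -/
theorem closure_subset_iff_nhds (s : ℕ) (hs : 1 ≤ s) (a b a' b' : Fin (s + 1) → ℝ)
    (hO : b - a ∈ Vplus s) (hP : b' - a' ∈ Vplus s) :
    closure (DoubleCone s a b) ⊆ DoubleCone s a' b' ↔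
      {x : Fin (s + 1) → ℝ | ∀ y ∈ DoubleCone s a b, y + x ∈ DoubleCone s a' b'}
        ∈ nhds (0 : Fin (s + 1) → ℝ) := by
  constructor
  · intro h
    have hcpt : IsCompact (closure (DoubleCone s a b)) := by
      have hb : Bornology.IsBounded (DoubleCone s a b) :=
        (Metric.isBounded_closedBall).subset (bounded_DoubleCone s a b)
      exact hb.isCompact_closure
    obtain ⟨ε, hε, hthick⟩ := hcpt.exists_thickening_subset_open
      (isOpen_DoubleCone s a' b') h
    rw [Metric.nhds_basis_ball.mem_iff]
    refine ⟨ε, hε, fun x hx y hy => ?_⟩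
    apply hthick
    rw [Metric.mem_thickening_iff]
    refine ⟨y, subset_closure hy, ?_⟩
    have : dist (y + x) y = dist x 0 := by
      simp [dist_eq_norm]
    rw [this]
    simpa [Metric.mem_ball] using hx
  · intro h
    rw [Metric.nhds_basis_ball.mem_iff] at h
    obtain ⟨ε, hε, hball⟩ := h
    intro y hyc
    obtain ⟨o, ho, hdo⟩ := Metric.mem_closure_iff.mp hyc ε hε
    have hx : y - o ∈ Metric.ball (0 : Fin (s + 1) → ℝ) ε := by
      rw [Metric.mem_ball, dist_zero_right, ← dist_eq_norm]
      exact hdo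
    have := hball hx o ho
    simpa using this
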